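/- arXiv:1510.03406 — 4 statements merged into one kernel-verified Lean document; each statement's English description precedes it below -/
import Mathlib

section
/- For each fixed i \ge 0, the normalized binary Krawtchouk polynomial satisfies Q_i^{(n,2)}(t) = t^i + O(1/n) uniformly for t \in [-1,1] as n \to \infty; that is, there exist constants C_i and N_i such that |Q_i^{(n,2)}(t) - t^i| \le C_i/n for all n \ge N_i and all t \in [-1,1]. -/
/-!
Put `a = (1 - t) / 2`, `b = (1 + t) / 2` and `(x)_j = ∏_{m < j} (x - m / n)` (that is,
`fallingProd x n⁻¹ j`). Dividing the numerator and the denominator by `n ^ i / i!` gives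
`Q_i(t) = (∑_j C(i,j) (-1)^j (a)_j (b)_{i-j}) / (1)_i`, while the binomial theorem gives
`t ^ i = (b - a) ^ i = ∑_j C(i,j) (-1)^j a^j b^{i-j}`. Each `(x)_j` with `x ∈ [0, 1]` is a product
of factors in `[-1, 1]` that are within `j / n` of `x`, so it is within `j² / n` of `x ^ j`; in
particular the denominator `(1)_i` is within `i² / n` of `1`.
-/

/-- Generalized binomial coefficient `C(x, j)` as a polynomial expression in a real `x`. -/
noncomputable def binomPoly (x : ℝ) (j : ℕ) : ℝ :=
  (∏ m ∈ Finset.range j, (x - (m : ℝ))) / (Nat.factorial j : ℝ)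

/-- Binary Krawtchouk polynomial `K_i^{(n,2)}(z)`. -/
noncomputable def kraw2 (n i : ℕ) (z : ℝ) : ℝ :=
  ∑ j ∈ Finset.range (i + 1), (-1 : ℝ) ^ j * binomPoly z j * binomPoly ((n : ℝ) - z) (i - j)

/-- Normalized binary Krawtchouk polynomial `Q_i^{(n,2)}(t) = K_i^{(n,2)}(n(1-t)/2)/C(n,i)`. -/
noncomputable def Qnorm2 (n i : ℕ) (t : ℝ) : ℝ :=
  kraw2 n i ((n : ℝ) * (1 - t) / 2) / (n.choose i : ℝ)

open Finset

def fallingProd (a h : ℝ) (j : ℕ) : ℝ :=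
  ∏ m ∈ range j, (a - m * h)

lemma binomPoly_natCast (n k : ℕ) : binomPoly n k = n.choose k := by
  rw [binomPoly, ← descPochhammer_eval_eq_prod_range, descPochhammer_eval_eq_descFactorial,
    Nat.descFactorial_eq_factorial_mul_choose, Nat.cast_mul]
  field_simp

lemma binomPoly_mul {c : ℝ} (hc : c ≠ 0) (a : ℝ) (j : ℕ) :
    binomPoly (c * a) j = c ^ j * fallingProd a c⁻¹ j / j.factorial := by
  have hfactor : ∀ m : ℕ, c * a - m = c * (a - m * c⁻¹) := fun m => by field_simp
  simp only [binomPoly, fallingProd, hfactor, prod_mul_distrib, prod_const, card_range]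

lemma pow_eq_sum_choose (t : ℝ) (i : ℕ) :
    t ^ i = ∑ j ∈ range (i + 1),
      (i.choose j : ℝ) * (-1) ^ j * (((1 - t) / 2) ^ j * ((1 + t) / 2) ^ (i - j)) := by
  rw [show t = -((1 - t) / 2) + (1 + t) / 2 by ring, add_pow]
  refine sum_congr rfl fun j _ => ?_
  rw [neg_pow]; ring_nf

lemma qnorm2_eq_sum_fallingProd_div {n : ℕ} (hn : n ≠ 0) (i : ℕ) (t : ℝ) :
    Qnorm2 n i t = (∑ j ∈ range (i + 1), (i.choose j : ℝ) * (-1) ^ j *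
      (fallingProd ((1 - t) / 2) (n : ℝ)⁻¹ j * fallingProd ((1 + t) / 2) (n : ℝ)⁻¹ (i - j))) /
      fallingProd 1 (n : ℝ)⁻¹ i := by
  have hn' : (n : ℝ) ≠ 0 := Nat.cast_ne_zero.mpr hn
  have hchoose : (n.choose i : ℝ) = n ^ i * fallingProd 1 (n : ℝ)⁻¹ i / i.factorial := by
    rw [← binomPoly_natCast, ← binomPoly_mul hn', mul_one]
  rw [Qnorm2, kraw2, hchoose, sum_div, sum_div]
  refine sum_congr rfl fun j hj => ?_
  have hj : j ≤ i := Nat.lt_succ_iff.mp (mem_range.mp hj)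
  rw [show (n : ℝ) * (1 - t) / 2 = n * ((1 - t) / 2) by ring,
    show (n : ℝ) - n * ((1 - t) / 2) = n * ((1 + t) / 2) by ring,
    binomPoly_mul hn', binomPoly_mul hn', Nat.cast_choose ℝ hj]
  have hpow : (n : ℝ) ^ i = n ^ j * n ^ (i - j) := by rw [← pow_add, Nat.add_sub_cancel' hj]
  rw [hpow]
  field_simp

lemma abs_prod_range_sub_prod_range_le {f g : ℕ → ℝ} {ε : ℝ} {j : ℕ}
    (hf : ∀ m < j, |f m| ≤ 1) (hg : ∀ m < j, |g m| ≤ 1) (hfg : ∀ m < j, |f m - g m| ≤ ε) :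
    |∏ m ∈ range j, f m - ∏ m ∈ range j, g m| ≤ j * ε := by
  induction j with
  | zero => simp
  | succ j ih =>
    have ih := ih (fun m hm => hf m (by omega)) (fun m hm => hg m (by omega))
      (fun m hm => hfg m (by omega))
    have hprod_g : |∏ m ∈ range j, g m| ≤ 1 := by
      rw [abs_prod]
      exact prod_le_one (fun _ _ => abs_nonneg _) fun m hm => hg m (by simp at hm; omega)
    have hsplit : ∏ m ∈ range (j + 1), f m - ∏ m ∈ range (j + 1), g m =
        (∏ m ∈ range j, f m - ∏ m ∈ range j, g m) * f j + (∏ m ∈ range j, g m) * (f j - g j) := by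
      rw [prod_range_succ, prod_range_succ]; ring
    rw [hsplit, Nat.cast_succ, add_one_mul]
    refine (abs_add_le _ _).trans (add_le_add ?_ ?_) <;> rw [abs_mul]
    · exact (mul_le_mul ih (hf j (by omega)) (abs_nonneg _) ((abs_nonneg _).trans ih)).trans_eq
        (mul_one _)
    · exact (mul_le_mul hprod_g (hfg j (by omega)) (abs_nonneg _) zero_le_one).trans_eq (one_mul _)

lemma abs_fallingProd_sub_pow_le {a h : ℝ} {j : ℕ} (ha₀ : 0 ≤ a) (ha₁ : a ≤ 1) (hh : 0 ≤ h)
    (hjh : j * h ≤ 1) : |fallingProd a h j - a ^ j| ≤ j * (j * h) := by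
  have hm : ∀ m < j, 0 ≤ m * h ∧ m * h ≤ j * h := fun m hm =>
    ⟨by positivity, mul_le_mul_of_nonneg_right (by exact_mod_cast hm.le) hh⟩
  rw [fallingProd, show a ^ j = ∏ _m ∈ range j, a by simp]
  refine abs_prod_range_sub_prod_range_le (fun m hm' => ?_) (fun _ _ => ?_) (fun m hm' => ?_)
  · have := hm m hm'; rw [abs_le]; constructor <;> linarith
  · rw [abs_le]; constructor <;> linarith
  · have := hm m hm'; rw [sub_sub_cancel_left, abs_neg, abs_of_nonneg this.1]; exact this.2

lemma abs_fallingProd_le_one {a h : ℝ} {j : ℕ} (ha₀ : 0 ≤ a) (ha₁ : a ≤ 1) (hh : 0 ≤ h)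
    (hjh : j * h ≤ 1) : |fallingProd a h j| ≤ 1 := by
  rw [fallingProd, abs_prod]
  refine prod_le_one (fun _ _ => abs_nonneg _) fun m hm => ?_
  have : (m : ℝ) * h ≤ j * h :=
    mul_le_mul_of_nonneg_right (by exact_mod_cast (mem_range.mp hm).le) hh
  rw [abs_le]; constructor <;> nlinarith

lemma abs_mul_sub_mul_le {x y u v : ℝ} (hy : |y| ≤ 1) (hu : |u| ≤ 1) :
    |x * y - u * v| ≤ |x - u| + |y - v| := by
  have : x * y - u * v = (x - u) * y + u * (y - v) := by ring
  rw [this]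
  refine (abs_add_le _ _).trans (add_le_add ?_ ?_) <;> rw [abs_mul]
  · exact mul_le_of_le_one_right (abs_nonneg _) hy
  · exact mul_le_of_le_one_left (abs_nonneg _) hu

lemma abs_div_sub_le {N D L δ : ℝ} (hL : |L| ≤ 1) (hD : |D - 1| ≤ δ) (hδ : δ ≤ 1 / 2) :
    |N / D - L| ≤ 2 * (|N - L| + δ) := by
  have hD₀ : 1 / 2 ≤ D := by linarith [(abs_le.mp hD).1]
  have hsplit : N / D - L = ((N - L) + L * (1 - D)) / D := by field_simp; ring
  rw [hsplit, abs_div, abs_of_pos (show 0 < D by linarith), div_le_iff₀ (by linarith)]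
  have : |L * (1 - D)| ≤ δ := by
    rw [abs_mul, abs_sub_comm]; exact mul_le_of_le_one_left (abs_nonneg _) hL |>.trans hD
  have hnonneg : 0 ≤ |N - L| + δ := add_nonneg (abs_nonneg _) ((abs_nonneg _).trans hD)
  calc |N - L + L * (1 - D)| ≤ |N - L| + δ := (abs_add_le _ _).trans (by linarith)
    _ ≤ 2 * (|N - L| + δ) * D := by nlinarith

lemma abs_sum_choose_mul_le {i : ℕ} {x : ℕ → ℝ} {M : ℝ} (hx : ∀ j ≤ i, |x j| ≤ M) :
    |∑ j ∈ range (i + 1), (i.choose j : ℝ) * (-1) ^ j * x j| ≤ 2 ^ i * M := by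
  calc |∑ j ∈ range (i + 1), (i.choose j : ℝ) * (-1) ^ j * x j|
      ≤ ∑ j ∈ range (i + 1), (i.choose j : ℝ) * M := by
        refine (abs_sum_le_sum_abs _ _).trans (sum_le_sum fun j hj => ?_)
        rw [abs_mul, abs_mul, abs_pow, abs_neg, abs_one, one_pow, mul_one, Nat.abs_cast]
        exact mul_le_mul_of_nonneg_left (hx j (by simpa [Nat.lt_succ_iff] using hj)) (by positivity)
    _ = 2 ^ i * M := by rw [← sum_mul, ← Nat.cast_sum, Nat.sum_range_choose]; push_cast; rfl

lemma abs_fallingProd_mul_sub_le {a b h : ℝ} {i j : ℕ} (ha : a ∈ Set.Icc (0 : ℝ) 1)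
    (hb : b ∈ Set.Icc (0 : ℝ) 1) (hh : 0 ≤ h) (hih : i * h ≤ 1) (hj : j ≤ i) :
    |fallingProd a h j * fallingProd b h (i - j) - a ^ j * b ^ (i - j)| ≤ 2 * (i * (i * h)) := by
  have hkh : ∀ k ≤ i, (k : ℝ) * h ≤ 1 ∧ (k : ℝ) * (k * h) ≤ i * (i * h) := fun k hk => by
    have : (k : ℝ) ≤ i := by exact_mod_cast hk
    exact ⟨(mul_le_mul_of_nonneg_right this hh).trans hih, by gcongr⟩
  have ha_pow : |a ^ j| ≤ 1 := by rw [abs_of_nonneg (pow_nonneg ha.1 j)]; exact pow_le_one₀ ha.1 ha.2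
  refine (abs_mul_sub_mul_le (abs_fallingProd_le_one hb.1 hb.2 hh (hkh _ (i.sub_le j)).1)
    ha_pow).trans ?_
  rw [two_mul]
  gcongr
  · exact (abs_fallingProd_sub_pow_le ha.1 ha.2 hh (hkh j hj).1).trans (hkh j hj).2
  · exact (abs_fallingProd_sub_pow_le hb.1 hb.2 hh (hkh _ (i.sub_le j)).1).trans
      (hkh _ (i.sub_le j)).2

lemma abs_sum_fallingProd_div_sub_pow_le {h t : ℝ} {i : ℕ} (ht : t ∈ Set.Icc (-1 : ℝ) 1)
    (hh : 0 ≤ h) (hih : i * h ≤ 1) (hε : i * (i * h) ≤ 1 / 2) :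
    |(∑ j ∈ range (i + 1), (i.choose j : ℝ) * (-1) ^ j *
      (fallingProd ((1 - t) / 2) h j * fallingProd ((1 + t) / 2) h (i - j))) /
      fallingProd 1 h i - t ^ i| ≤ 2 * (2 ^ (i + 1) + 1) * (i * (i * h)) := by
  have ha : (1 - t) / 2 ∈ Set.Icc (0 : ℝ) 1 := ⟨by linarith [ht.2], by linarith [ht.1]⟩
  have hb : (1 + t) / 2 ∈ Set.Icc (0 : ℝ) 1 := ⟨by linarith [ht.1], by linarith [ht.2]⟩
  have hden : |fallingProd 1 h i - 1| ≤ i * (i * h) := by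
    simpa using abs_fallingProd_sub_pow_le zero_le_one le_rfl hh hih
  have ht_pow : |t ^ i| ≤ 1 := by rw [abs_pow]; exact pow_le_one₀ (abs_nonneg _) (abs_le.mpr ht)
  calc _ ≤ 2 * (|_ - t ^ i| + i * (i * h)) := abs_div_sub_le ht_pow hden hε
    _ ≤ 2 * (2 ^ i * (2 * (i * (i * h))) + i * (i * h)) := by
      rw [pow_eq_sum_choose t i, ← sum_sub_distrib]
      simp_rw [← mul_sub]
      gcongr
      exact abs_sum_choose_mul_le fun j hj => abs_fallingProd_mul_sub_le ha hb hh hih hj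
    _ = 2 * (2 ^ (i + 1) + 1) * (i * (i * h)) := by ring

theorem stmt_1 (i : ℕ) :
    ∃ C : ℝ, ∃ N : ℕ, ∀ n : ℕ, N ≤ n → ∀ t ∈ Set.Icc (-1 : ℝ) 1,
      |Qnorm2 n i t - t ^ i| ≤ C / (n : ℝ) := by
  refine ⟨2 * (2 ^ (i + 1) + 1) * i ^ 2, 2 * i ^ 2 + 1, fun n hn t ht => ?_⟩
  have hn' : (2 * i ^ 2 + 1 : ℝ) ≤ n := by exact_mod_cast hn
  have hn₀ : (0 : ℝ) < n := by linarith [sq_nonneg (i : ℝ)]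
  have hih : i * (n : ℝ)⁻¹ ≤ 1 := by
    rw [← div_eq_mul_inv, div_le_one hn₀]; nlinarith [(Nat.cast_nonneg i : (0 : ℝ) ≤ i)]
  have hε : i * (i * (n : ℝ)⁻¹) ≤ 1 / 2 := by
    rw [← mul_assoc, ← div_eq_mul_inv, div_le_iff₀ hn₀]; linarith
  rw [qnorm2_eq_sum_fallingProd_div (Nat.cast_pos.mp hn₀).ne']
  convert abs_sum_fallingProd_div_sub_pow_le ht (inv_nonneg.mpr hn₀.le) hih hε using 1
  field_simp
end

section
/- Suppose for a fixed M there exist nodes -1 < \alpha_0 < \cdots < \alpha_{k-1} < 1 and positive weights \rho_0,\ldots,\rho_{k-1} such that f_0 = f(1)/M + \sum_{i=0}^{k-1}\rho_i f(\alpha_i) for every real polynomial f of degree at most 2k-1 (where f_0 = \int f\,d\mu_n). Let h be a function whose Hermite interpolant f at the nodes \alpha_0,\ldots,\alpha_{k-1} (i.e., f(\alpha_i)=h(\alpha_i), f'(\alpha_i)=h'(\alpha_i)) satisfies f(t) \le h(t) on [-1,1). Then for any polynomial F of degree at most 2k-1 with F(t) \le h(t) on [-1,1), one has F_0 M - F(1)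 \le f_0 M - f(1) = M\sum_{i=0}^{k-1}\rho_i h(\alpha_i). -/
/-!
The quadrature formula turns `p₀ M - p(1)` into `M ∑ ρᵢ p(αᵢ)` for every polynomial of degree
at most `2k - 1`. Since the weights are positive and `F ≤ h = f` at the nodes, the bound follows.
-/

open Polynomial

lemma mul_sub_eval_one_eq_of_quadrature {ι : Type*} [Fintype ι] {M : ℝ} (hM : M ≠ 0)
    (α ρ : ι → ℝ) {l : ℝ} (p : ℝ[X]) (hl : l = p.eval 1 / M + ∑ i, ρ i * p.eval (α i)) :
    l * M - p.eval 1 = M * ∑ i, ρ i * p.eval (α i) := by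
  rw [hl]
  field_simp
  ring

theorem stmt_6_general (k : ℕ) (M : ℝ) (hM : 0 < M)
    (α : Fin k → ℝ) (hα : ∀ i, α i ∈ Set.Ioo (-1 : ℝ) 1)
    (ρ : Fin k → ℝ) (hρ : ∀ i, 0 < ρ i)
    -- `L p` is the zeroth Krawtchouk coefficient `p_0 = ∫ p dμ_n` of `p`;
    -- the quadrature formula holds for all polynomials of degree at most `2k-1`:
    (L : Polynomial ℝ → ℝ)
    (hquad : ∀ p : Polynomial ℝ, p.natDegree ≤ 2 * k - 1 →
      L p = p.eval 1 / M + ∑ i, ρ i * p.eval (α i))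
    (h : ℝ → ℝ)
    -- `f` is the Hermite interpolant of `h` at the nodes `α i`, lying below `h`:
    (f : Polynomial ℝ) (hdeg : f.natDegree ≤ 2 * k - 1)
    (hint : ∀ i, f.eval (α i) = h (α i))
    -- any competitor polynomial `F` of degree at most `2k-1` lying below `h`:
    (F : Polynomial ℝ) (hFdeg : F.natDegree ≤ 2 * k - 1)
    (hFh : ∀ t ∈ Set.Ico (-1 : ℝ) 1, F.eval t ≤ h t) :
    L F * M - F.eval 1 ≤ L f * M - f.eval 1 ∧
      L f * M - f.eval 1 = M * ∑ i, ρ i * h (α i) := by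
  have hF := mul_sub_eval_one_eq_of_quadrature hM.ne' α ρ F (hquad F hFdeg)
  have hf := mul_sub_eval_one_eq_of_quadrature hM.ne' α ρ f (hquad f hdeg)
  have hf_nodes : ∑ i, ρ i * f.eval (α i) = ∑ i, ρ i * h (α i) := by simp only [hint]
  have hF_nodes : ∑ i, ρ i * F.eval (α i) ≤ ∑ i, ρ i * h (α i) :=
    Finset.sum_le_sum fun i _ =>
      mul_le_mul_of_nonneg_left (hFh (α i) (Set.Ioo_subset_Ico_self (hα i))) (hρ i).le
  rw [hF, hf, hf_nodes]
  exact ⟨mul_le_mul_of_nonneg_left hF_nodes hM.le, rfl⟩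

theorem stmt_6 (k : ℕ) (hk : 1 ≤ k) (M : ℝ) (hM : 0 < M)
    (α : Fin k → ℝ) (hmono : StrictMono α) (hα : ∀ i, α i ∈ Set.Ioo (-1 : ℝ) 1)
    (ρ : Fin k → ℝ) (hρ : ∀ i, 0 < ρ i)
    -- `L p` is the zeroth Krawtchouk coefficient `p_0 = ∫ p dμ_n` of `p`;
    -- the quadrature formula holds for all polynomials of degree at most `2k-1`:
    (L : Polynomial ℝ → ℝ)
    (hquad : ∀ p : Polynomial ℝ, p.natDegree ≤ 2 * k - 1 →
      L p = p.eval 1 / M + ∑ i, ρ i * p.eval (α i))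
    (h : ℝ → ℝ)
    -- `f` is the Hermite interpolant of `h` at the nodes `α i`, lying below `h`:
    (f : Polynomial ℝ) (hdeg : f.natDegree ≤ 2 * k - 1)
    (hint : ∀ i, f.eval (α i) = h (α i))
    (hint' : ∀ i, (Polynomial.derivative f).eval (α i) = deriv h (α i))
    (hfh : ∀ t ∈ Set.Ico (-1 : ℝ) 1, f.eval t ≤ h t)
    -- any competitor polynomial `F` of degree at most `2k-1` lying below `h`:
    (F : Polynomial ℝ) (hFdeg : F.natDegree ≤ 2 * k - 1)
    (hFh : ∀ t ∈ Set.Ico (-1 : ℝ) 1, F.eval t ≤ h t) :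
    L F * M - F.eval 1 ≤ L f * M - f.eval 1 ∧
      L f * M - f.eval 1 = M * ∑ i, ρ i * h (α i) :=
  stmt_6_general k M hM α hα ρ hρ L hquad h f hdeg hint F hFdeg hFh
end

section
/- Let h be continuous on [-1,1], f a polynomial of degree at most 2k-1 with Krawtchouk expansion f = \sum_i f_i Q_i^{(n,q)}, and suppose a quadrature f_0 = f(1)/M + \sum_{i=0}^{k-1}\rho_i f(\alpha_i) holds for all polynomials of degree at most 2k-1, with \rho_i > 0. Suppose F = \sum_j F_j Q_j^{(n,q)} is any polynomial (possibly of degree > 2k-1) with F(t) \le h(t) on [-1,1], F_j \ge 0 for all j \ge 2k, and the test functions satisfy P_j := 1/M + \sum_{i=0}^{k-1}\rho_i Q_j^{(n,q)}(\alpha_i) \ge 0 for all j \ge 2k. Then F_0 M - F(1) \le M\sum_{i=0}^{k-1}\rho_i h(\alpha_i). -/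
/-!
Let `L f = f 1 / M + ∑ ρ_i f(α_i)`. The quadrature says that `L` returns the constant coefficient
of every expansion supported on indices `< 2k`, and `L Q_j = P_j ≥ 0` for `j ≥ 2k`, so by
linearity `F_0 ≤ L F` whenever the high coefficients `F_j` are nonnegative. Bounding `F` by `h`
at the nodes gives `F_0 ≤ F(1)/M + ∑ ρ_i h(α_i)`.
-/

open Finset

noncomputable def quadratureFunctional {ι : Type*} [Fintype ι] (M : ℝ) (ρ α : ι → ℝ)
    (f : ℝ → ℝ) : ℝ :=
  f 1 / M + ∑ i, ρ i * f (α i)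

namespace quadratureFunctional

variable {ι : Type*} [Fintype ι] {M : ℝ} {ρ α : ι → ℝ}

theorem sum_mul {κ : Type*} (s : Finset κ) (c : κ → ℝ) (Q : κ → ℝ → ℝ) :
    quadratureFunctional M ρ α (fun t => ∑ j ∈ s, c j * Q j t) =
      ∑ j ∈ s, c j * quadratureFunctional M ρ α (Q j) := by
  simp only [quadratureFunctional, mul_add, sum_add_distrib, sum_div, mul_sum]
  rw [sum_comm (s := univ)]
  congr 1
  · exact sum_congr rfl fun j _ => by ring
  · exact sum_congr rfl fun j _ => sum_congr rfl fun i _ => by ring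

theorem le_of_le_at_nodes (hρ : ∀ i, 0 ≤ ρ i) {f g : ℝ → ℝ} (hfg : ∀ i, f (α i) ≤ g (α i)) :
    quadratureFunctional M ρ α f ≤ f 1 / M + ∑ i, ρ i * g (α i) :=
  add_le_add_right (sum_le_sum fun i _ => mul_le_mul_of_nonneg_left (hfg i) (hρ i)) _

theorem coeff_zero_le {m n : ℕ} (hmn : m ≤ n) {Q : ℕ → ℝ → ℝ} {c : ℕ → ℝ}
    (hquad : c 0 = quadratureFunctional M ρ α (fun t => ∑ j ∈ range m, c j * Q j t))
    (hc : ∀ j, m ≤ j → 0 ≤ c j) (hQ : ∀ j, m ≤ j → 0 ≤ quadratureFunctional M ρ α (Q j)) :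
    c 0 ≤ quadratureFunctional M ρ α (fun t => ∑ j ∈ range n, c j * Q j t) := by
  have htail : 0 ≤ ∑ j ∈ Ico m n, c j * quadratureFunctional M ρ α (Q j) :=
    sum_nonneg fun j hj =>
      have hmj := (mem_Ico.mp hj).1
      mul_nonneg (hc j hmj) (hQ j hmj)
  rw [sum_mul, ← sum_range_add_sum_Ico _ hmn, ← sum_mul, ← hquad]
  linarith

end quadratureFunctional

theorem stmt_14_general (k : ℕ) (M : ℝ) (hM : 0 < M)
    -- `Q j` are the normalized Krawtchouk polynomials, with `Q j 1 = 1`: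
    (Q : ℕ → ℝ → ℝ) (hQ1 : ∀ j : ℕ, Q j 1 = 1)
    (α : Fin k → ℝ) (hα : ∀ i, α i ∈ Set.Icc (-1 : ℝ) 1)
    (ρ : Fin k → ℝ) (hρ : ∀ i, 0 < ρ i)
    (h : ℝ → ℝ)
    -- the quadrature holds for every polynomial of degree at most `2k-1`,
    -- i.e. for every Krawtchouk expansion supported on indices `< 2k`:
    (hquad : ∀ c : ℕ → ℝ,
      c 0 = (∑ j ∈ Finset.range (2 * k), c j * Q j 1) / M +
        ∑ i, ρ i * (∑ j ∈ Finset.range (2 * k), c j * Q j (α i)))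
    -- `F = ∑_j F_j Q_j` is a polynomial possibly of degree `> 2k-1`:
    (N : ℕ) (hN : 2 * k ≤ N + 1) (c : ℕ → ℝ) (F : ℝ → ℝ)
    (hF : ∀ t : ℝ, F t = ∑ j ∈ Finset.range (N + 1), c j * Q j t)
    (hFh : ∀ t ∈ Set.Icc (-1 : ℝ) 1, F t ≤ h t)
    (hcpos : ∀ j : ℕ, 2 * k ≤ j → 0 ≤ c j)
    -- the test functions `P_j` are nonnegative for `j ≥ 2k`:
    (hP : ∀ j : ℕ, 2 * k ≤ j → 0 ≤ 1 / M + ∑ i, ρ i * Q j (α i)) :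
    c 0 * M - F 1 ≤ M * ∑ i, ρ i * h (α i) := by
  have hPL : ∀ j, 2 * k ≤ j → 0 ≤ quadratureFunctional M ρ α (Q j) := fun j hj => by
    simpa only [quadratureFunctional, hQ1] using hP j hj
  have hcoeff : c 0 ≤ quadratureFunctional M ρ α F := by
    rw [funext hF]
    exact quadratureFunctional.coeff_zero_le hN (hquad c) hcpos hPL
  have hnodes : quadratureFunctional M ρ α F ≤ F 1 / M + ∑ i, ρ i * h (α i) :=
    quadratureFunctional.le_of_le_at_nodes (fun i => (hρ i).le) fun i => hFh _ (hα i)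
  have hmul := mul_le_mul_of_nonneg_right (hcoeff.trans hnodes) hM.le
  rw [add_mul, div_mul_cancel₀ _ hM.ne'] at hmul
  linarith

theorem stmt_14 (k : ℕ) (hk : 1 ≤ k) (M : ℝ) (hM : 0 < M)
    -- `Q j` are the normalized Krawtchouk polynomials, with `Q j 1 = 1`:
    (Q : ℕ → ℝ → ℝ) (hQ1 : ∀ j : ℕ, Q j 1 = 1)
    (α : Fin k → ℝ) (hα : ∀ i, α i ∈ Set.Icc (-1 : ℝ) 1)
    (ρ : Fin k → ℝ) (hρ : ∀ i, 0 < ρ i)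
    (h : ℝ → ℝ) (hcont : ContinuousOn h (Set.Icc (-1 : ℝ) 1))
    -- the quadrature holds for every polynomial of degree at most `2k-1`,
    -- i.e. for every Krawtchouk expansion supported on indices `< 2k`:
    (hquad : ∀ c : ℕ → ℝ,
      c 0 = (∑ j ∈ Finset.range (2 * k), c j * Q j 1) / M +
        ∑ i, ρ i * (∑ j ∈ Finset.range (2 * k), c j * Q j (α i)))
    -- `F = ∑_j F_j Q_j` is a polynomial possibly of degree `> 2k-1`:
    (N : ℕ) (hN : 2 * k ≤ N + 1) (c : ℕ → ℝ) (F : ℝ → ℝ)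
    (hF : ∀ t : ℝ, F t = ∑ j ∈ Finset.range (N + 1), c j * Q j t)
    (hFh : ∀ t ∈ Set.Icc (-1 : ℝ) 1, F t ≤ h t)
    (hcpos : ∀ j : ℕ, 2 * k ≤ j → 0 ≤ c j)
    -- the test functions `P_j` are nonnegative for `j ≥ 2k`:
    (hP : ∀ j : ℕ, 2 * k ≤ j → 0 ≤ 1 / M + ∑ i, ρ i * Q j (α i)) :
    c 0 * M - F 1 ≤ M * ∑ i, ρ i * h (α i) :=
  stmt_14_general k M hM Q hQ1 α hα ρ hρ h hquad N hN c F hF hFh hcpos hP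
end

section
/- Let h:[-1,1)\to(0,\infty) be continuous and convex, and let \ell \in (-1,0). Define a_0 = \frac{n(1-\ell)-M}{n(M\ell + 1 - \ell)} and assume M\ell + 1 - \ell \ne 0, a_0 \in (\ell, 1), and M(1+n\ell^2) - n(1-\ell)^2 > 0. If f is the unique quadratic polynomial whose graph passes through (\ell, h(\ell)) and is tangent to the graph of h at (a_0, h(a_0)), and if f_0 = \int f\,d\mu_n = f(0) + f''(0)/(2n) (q=2 measure moments: \int t\,d\mu_n = 0, \int t^2 d\mu_n = 1/n), then f_0 M - f(1) = \frac{n(M\ell+1-\ell)^2 h(a_0) + M(M-n-1)h(\ell)}{M(1+n\ell^2) - n(1-\ell)^2}. -/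
/-!
The functional `Λ f = M (f(0) + f''(0)/(2n)) - f(1)` is linear in `f`, and on quadratics it is
determined by `f(l)`, `f(a₀)` and `f'(a₀)`. The node `a₀` is exactly the one for which the weight
of `f'(a₀)` vanishes, so `Λ` becomes a two-point quadrature rule with nodes `l` and `a₀` that is
exact on quadratics; its weights are read off from `Λ 1 = M - 1`, `Λ t = -1`, `Λ t² = M/n - 1`.
-/

open Polynomial

namespace Polynomial

variable {R : Type*} [CommSemiring R]

theorem eval_eq_of_natDegree_le_two {f : R[X]} (hf : f.natDegree ≤ 2) (x : R) :
    f.eval x = f.coeff 0 + f.coeff 1 * x + f.coeff 2 * x ^ 2 := by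
  rw [eval_eq_sum_range' (Nat.lt_succ_of_le hf)]
  simp only [Finset.sum_range_succ, Finset.sum_range_zero, pow_zero, pow_one, mul_one, zero_add]

theorem eval_zero_derivative_derivative (f : R[X]) :
    (derivative (derivative f)).eval 0 = 2 * f.coeff 2 := by
  rw [← coeff_zero_eq_eval_zero, coeff_derivative, coeff_derivative]
  push_cast
  ring

end Polynomial

theorem two_point_quadrature_of_natDegree_le_two {n M l a0 : ℝ} (hn : n ≠ 0)
    (hden : M * l + 1 - l ≠ 0) (hD : M * (1 + n * l ^ 2) - n * (1 - l) ^ 2 ≠ 0)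
    (ha0 : a0 = (n * (1 - l) - M) / (n * (M * l + 1 - l)))
    {f : ℝ[X]} (hf : f.natDegree ≤ 2) :
    (f.eval 0 + (derivative (derivative f)).eval 0 / (2 * n)) * M - f.eval 1 =
      (n * (M * l + 1 - l) ^ 2 * f.eval a0 + M * (M - n - 1) * f.eval l) /
        (M * (1 + n * l ^ 2) - n * (1 - l) ^ 2) := by
  simp only [eval_zero_derivative_derivative, eval_eq_of_natDegree_le_two hf, ha0]
  field_simp
  ring

theorem stmt_16_general (n : ℕ) (hn : 1 ≤ n) (M : ℝ)
    (h : ℝ → ℝ)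
    (l : ℝ)
    (hden : M * l + 1 - l ≠ 0)
    (a0 : ℝ) (ha0def : a0 = ((n : ℝ) * (1 - l) - M) / ((n : ℝ) * (M * l + 1 - l)))
    (hden2 : 0 < M * (1 + (n : ℝ) * l ^ 2) - (n : ℝ) * (1 - l) ^ 2)
    -- `f` is the quadratic through `(l, h l)`, tangent to the graph of `h` at `(a0, h a0)`:
    (f : Polynomial ℝ) (hdeg : f.natDegree ≤ 2)
    (h1 : f.eval l = h l) (h2 : f.eval a0 = h a0)
    -- `f_0 = ∫ f dμ_n = f(0) + f''(0)/(2n)` for the binary measure `μ_n`: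
    (f0 : ℝ)
    (hf0 : f0 = f.eval 0 +
      (Polynomial.derivative (Polynomial.derivative f)).eval 0 / (2 * (n : ℝ))) :
    f0 * M - f.eval 1 =
      ((n : ℝ) * (M * l + 1 - l) ^ 2 * h a0 + M * (M - (n : ℝ) - 1) * h l) /
        (M * (1 + (n : ℝ) * l ^ 2) - (n : ℝ) * (1 - l) ^ 2) := by
  rw [hf0, ← h1, ← h2]
  exact two_point_quadrature_of_natDegree_le_two (Nat.cast_ne_zero.mpr (by omega)) hden
    hden2.ne' ha0def hdeg

theorem stmt_16 (n : ℕ) (hn : 1 ≤ n) (M : ℝ) (hM : 0 < M)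
    (h : ℝ → ℝ) (hcont : ContinuousOn h (Set.Ico (-1 : ℝ) 1))
    (hconv : ConvexOn ℝ (Set.Ico (-1 : ℝ) 1) h)
    (hpos : ∀ t ∈ Set.Ico (-1 : ℝ) 1, 0 < h t)
    (l : ℝ) (hl : l ∈ Set.Ioo (-1 : ℝ) 0)
    (hden : M * l + 1 - l ≠ 0)
    (a0 : ℝ) (ha0def : a0 = ((n : ℝ) * (1 - l) - M) / ((n : ℝ) * (M * l + 1 - l)))
    (ha0 : a0 ∈ Set.Ioo l 1)
    (hden2 : 0 < M * (1 + (n : ℝ) * l ^ 2) - (n : ℝ) * (1 - l) ^ 2)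
    (hdiff : DifferentiableAt ℝ h a0)
    -- `f` is the quadratic through `(l, h l)`, tangent to the graph of `h` at `(a0, h a0)`:
    (f : Polynomial ℝ) (hdeg : f.natDegree ≤ 2)
    (h1 : f.eval l = h l) (h2 : f.eval a0 = h a0)
    (h3 : (Polynomial.derivative f).eval a0 = deriv h a0)
    -- `f_0 = ∫ f dμ_n = f(0) + f''(0)/(2n)` for the binary measure `μ_n`:
    (f0 : ℝ)
    (hf0 : f0 = f.eval 0 +
      (Polynomial.derivative (Polynomial.derivative f)).eval 0 / (2 * (n : ℝ))) :
    f0 * M - f.eval 1 =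
      ((n : ℝ) * (M * l + 1 - l) ^ 2 * h a0 + M * (M - (n : ℝ) - 1) * h l) /
        (M * (1 + (n : ℝ) * l ^ 2) - (n : ℝ) * (1 - l) ^ 2) :=
  stmt_16_general n hn M h l hden a0 ha0def hden2 f hdeg h1 h2 f0 hf0
end
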